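/- arXiv:2601.02236 — 3 statements merged into one kernel-verified Lean document; each statement's English description precedes it below -/
import Mathlib

section
/- Let Z be a nonempty finite type, let T be a nonempty finite type with probability weights w : T → ℝ (w t ≥ 0, ∑_t w t = 1), and for each t let p t be a probability distribution on Z. Define Q z = ∑_t w t · p t z. Then for every probability distribution q on Z with q z > 0 whenever Q z > 0, the compensation identity holds: ∑_t w t · KL(p t, q) − ∑_t w t · KL(p t, Q) = KL(Q, q). -/
/-- KL divergence between finitely supported distributions `p` and `q` on a finite type:
`KL(p, q) = ∑_{z : p z > 0} p z * log (p z / q z)`. -/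
noncomputable def KL {Z : Type*} [Fintype Z] (p q : Z → ℝ) : ℝ :=
  ∑ z, if 0 < p z then p z * Real.log (p z / q z) else 0

/-!
On the support of `p t` (which lies in the support of `Q`, hence of `q`) the logarithm splits,
so `KL (p t) q - KL (p t) Q = ∑ z, p t z * (log (Q z) - log (q z))`: the `log (p t z)` terms
cancel. This is linear in `p t`, and averaging over `t` with weights `w` replaces `p t` by `Q`,
which is `KL Q q` written with split logarithms.
-/

open Real Finset

section KL

variable {Z : Type*} [Fintype Z] {p q r : Z → ℝ}

theorem KL_eq_sum_mul_log_sub (hp : ∀ z, 0 ≤ p z) (hpq : ∀ z, 0 < p z → 0 < q z) :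
    KL p q = ∑ z, p z * (log (p z) - log (q z)) := by
  refine sum_congr rfl fun z _ => ?_
  rcases (hp z).eq_or_lt with hpz | hpz
  · simp [← hpz]
  rw [if_pos hpz, log_div hpz.ne' (hpq z hpz).ne']

theorem KL_sub_KL (hp : ∀ z, 0 ≤ p z) (hpq : ∀ z, 0 < p z → 0 < q z)
    (hpr : ∀ z, 0 < p z → 0 < r z) :
    KL p q - KL p r = ∑ z, p z * (log (r z) - log (q z)) := by
  rw [KL_eq_sum_mul_log_sub hp hpq, KL_eq_sum_mul_log_sub hp hpr, ← sum_sub_distrib]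
  exact sum_congr rfl fun z _ => by ring

end KL

theorem compensation_identity_general
    {Z T : Type*} [Fintype Z] [Fintype T]
    (w : T → ℝ) (hw0 : ∀ t, 0 ≤ w t)
    (p : T → Z → ℝ) (hp0 : ∀ t z, 0 ≤ p t z)
    (Q : Z → ℝ) (hQ : ∀ z, Q z = ∑ t, w t * p t z)
    (q : Z → ℝ)
    (habs : ∀ z, 0 < Q z → 0 < q z) :
    (∑ t, w t * KL (p t) q) - (∑ t, w t * KL (p t) Q) = KL Q q := by
  have hwp : ∀ t z, 0 ≤ w t * p t z := fun t z => mul_nonneg (hw0 t) (hp0 t z)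
  have hQ0 : ∀ z, 0 ≤ Q z := fun z => hQ z ▸ sum_nonneg fun t _ => hwp t z
  have hsupp : ∀ t, 0 < w t → ∀ z, 0 < p t z → 0 < Q z := fun t hw z hp =>
    hQ z ▸ sum_pos' (fun t _ => hwp t z) ⟨t, mem_univ t, mul_pos hw hp⟩
  have hterm : ∀ t, w t * (KL (p t) q - KL (p t) Q) =
      ∑ z, w t * p t z * (log (Q z) - log (q z)) := by
    intro t
    rcases (hw0 t).eq_or_lt with hw | hw
    · simp [← hw]
    rw [KL_sub_KL (hp0 t) (fun z hp => habs z (hsupp t hw z hp)) (hsupp t hw), mul_sum]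
    exact sum_congr rfl fun z _ => by ring
  calc (∑ t, w t * KL (p t) q) - (∑ t, w t * KL (p t) Q)
      = ∑ t, w t * (KL (p t) q - KL (p t) Q) := by simp only [mul_sub, sum_sub_distrib]
    _ = ∑ z, Q z * (log (Q z) - log (q z)) := by
      simp_rw [hterm, sum_comm (γ := T), ← sum_mul, ← hQ]
    _ = KL Q q := (KL_eq_sum_mul_log_sub hQ0 habs).symm

/-- Compensation identity: the gap between the expected KL divergence to `q` and to the
mixture `Q` is exactly `KL(Q, q)`. -/
theorem compensation_identity
    {Z T : Type*} [Fintype Z] [Nonempty Z] [Fintype T] [Nonempty T]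
    (w : T → ℝ) (hw0 : ∀ t, 0 ≤ w t) (hw1 : ∑ t, w t = 1)
    (p : T → Z → ℝ) (hp0 : ∀ t z, 0 ≤ p t z) (hp1 : ∀ t, ∑ z, p t z = 1)
    (Q : Z → ℝ) (hQ : ∀ z, Q z = ∑ t, w t * p t z)
    (q : Z → ℝ) (hq0 : ∀ z, 0 ≤ q z) (hq1 : ∑ z, q z = 1)
    (habs : ∀ z, 0 < Q z → 0 < q z) :
    (∑ t, w t * KL (p t) q) - (∑ t, w t * KL (p t) Q) = KL Q q :=
  compensation_identity_general w hw0 p hp0 Q hQ q habs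
end

section
/- Let L ≥ 1, b ≥ 1, k ≥ 1 be natural numbers, let J = ⌈L / b⌉, and let n : Fin J → ℕ satisfy n_j ≤ b for all j and ∑_j n_j = L. Then the total step bound holds: ∑_{j=1}^{J} ⌈n_j / k⌉ ≤ ⌈L / k⌉ + ⌈L / b⌉, where ⌈m / k⌉ denotes natural-number ceiling division. -/
lemma sum_div_le_div_sum {k : ℕ} (s : Finset (Fin m)) (f : Fin m → ℕ) :
    ∑ i ∈ s, f i / k ≤ (∑ i ∈ s, f i) / k := by
  induction s using Finset.induction with
  | empty => simp
  | insert a s h ih =>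
    rw [Finset.sum_insert h, Finset.sum_insert h]
    calc _ ≤ f _ / k + (∑ i ∈ _, f i) / k := by gcongr
    _ ≤ _ := Nat.add_div_le_add_div _ _ _

/-- Total NFE bound for block diffusion with confidence-adaptive decoding: if `L`
positions are partitioned into `J = ⌈L / b⌉` blocks of sizes `n_j ≤ b` summing to `L`,
and at least `k` tokens are committed per step, then
`∑_j ⌈n_j / k⌉ ≤ ⌈L / k⌉ + ⌈L / b⌉` (natural-number ceiling division). -/
theorem total_step_bound {L b k : ℕ} (hL : 1 ≤ L) (hb : 1 ≤ b) (hk : 1 ≤ k)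
    (n : Fin ((L + b - 1) / b) → ℕ) (hnb : ∀ j, n j ≤ b) (hsum : ∑ j, n j = L) :
    ∑ j, (n j + k - 1) / k ≤ (L + k - 1) / k + (L + b - 1) / b := by
  have h1 : ∑ j, (n j + k - 1) / k ≤ ∑ j, (n j / k + 1) := by
    apply Finset.sum_le_sum
    intro j _
    calc (n j + k - 1) / k ≤ (n j + k) / k := Nat.div_le_div_right (by omega)
    _ = n j / k + 1 := Nat.add_div_right _ (by omega)
  have h2 : ∑ j, (n j / k + 1) = (∑ j, n j / k) + (L + b - 1) / b := by
    rw [Finset.sum_add_distrib]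
    simp
  have h3 : ∑ j, n j / k ≤ L / k := by
    calc _ ≤ (∑ j, n j) / k := sum_div_le_div_sum _ _
    _ = L / k := by rw [hsum]
  have h4 : L / k ≤ (L + k - 1) / k := Nat.div_le_div_right (by omega)
  omega
end

section
/- Let I be a finite type, let c : I → ℝ be confidence scores, let λ > 0, and define L(S) = ∑_{i ∈ S} (1 − c i − λ) for S ⊆ I. Let k_min ≤ k_max ≤ |I| be natural numbers with k_min ≥ 1. Then there exists a set S* ⊆ I with k_min ≤ |S*| ≤ k_max such that (i) S* minimizes L over all S ⊆ I with k_min ≤ |S| ≤ k_max, and (ii) S* is a top-|S*| set, i.e., for all i ∈ S* and j ∉ S*, c i ≥ c j. -/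
/-- The constrained risk–efficiency optimum is attained by a confidence-sorted prefix:
there is a commit set `S*` with `k_min ≤ |S*| ≤ k_max` that minimizes
`L(S) = ∑_{i ∈ S} (1 − c i − λ)` over all such sets and is a top-`|S*|` set. -/
theorem exists_topk_constrained_minimizer {I : Type*} [Fintype I] [DecidableEq I]
    (c : I → ℝ) (lam : ℝ) (hlam : 0 < lam)
    (kmin kmax : ℕ) (hkmin : 1 ≤ kmin) (hkk : kmin ≤ kmax) (hkmax : kmax ≤ Fintype.card I) :
    ∃ S' : Finset I, kmin ≤ S'.card ∧ S'.card ≤ kmax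
      ∧ (∀ S : Finset I, kmin ≤ S.card → S.card ≤ kmax →
          ∑ i ∈ S', (1 - c i - lam) ≤ ∑ i ∈ S, (1 - c i - lam))
      ∧ (∀ i ∈ S', ∀ j ∉ S', c j ≤ c i) := by
  obtain ⟨T, -, hTcard⟩ := Finset.exists_subset_card_eq (s := (Finset.univ : Finset I)) (n := kmin)
    (by simpa using hkk.trans hkmax)
  set 𝒜 := (Finset.univ : Finset (Finset I)).filter
    (fun S => kmin ≤ S.card ∧ S.card ≤ kmax) with h𝒜
  have h𝒜ne : 𝒜.Nonempty := ⟨T, by simp [h𝒜, hTcard, hkk]⟩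
  obtain ⟨S', hS'mem, hmin⟩ := 𝒜.exists_min_image (fun S => ∑ i ∈ S, (1 - c i - lam)) h𝒜ne
  simp only [h𝒜, Finset.mem_filter, Finset.mem_univ, true_and] at hS'mem
  refine ⟨S', hS'mem.1, hS'mem.2, ?_, ?_⟩
  · intro S h1 h2
    exact hmin S (by simp [h𝒜, h1, h2])
  · intro i hi j hj
    by_contra hc
    push_neg at hc
    have hjS : j ∉ S'.erase i := fun h => hj (Finset.mem_of_mem_erase h)
    have hcard1 : 1 ≤ S'.card := le_trans hkmin hS'mem.1
    have hcard : (insert j (S'.erase i)).card = S'.card := by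
      rw [Finset.card_insert_of_notMem hjS, Finset.card_erase_of_mem hi]
      omega
    have hmem : insert j (S'.erase i) ∈ 𝒜 := by
      simp [h𝒜, hcard, hS'mem.1, hS'mem.2]
    have hle := hmin _ hmem
    have hsum : ∑ k ∈ insert j (S'.erase i), (1 - c k - lam)
        = (∑ k ∈ S', (1 - c k - lam)) - (1 - c i - lam) + (1 - c j - lam) := by
      rw [Finset.sum_insert hjS, Finset.sum_erase_eq_sub hi]; ring
    simp only [hsum] at hle
    linarith
end
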